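/- Let d ≥ 1, let σ > 0, and let p be a probability measure on ℝ^d with mean μ and covariance Σ. Then for every d×d real matrix W and every b ∈ ℝ^d, the denoising score-matching loss admits the closed-form decomposition L(W, b) = tr((W − I)Σ(W − I)ᵀ) + σ² tr(W Wᵀ) + ‖(W − I)μ + b‖². -/

import Mathlib

/-!
Writing the residual as `Wε + ((W - I)x + b)`, both integrals in the loss are second moments of
an affine image `My + c` of a square-integrable measure `q`. Coordinatewise, a second moment is
the variance plus the squared mean, and the variance of `y ↦ Mₖ ⬝ y` is `Mₖ ⬝ C Mₖ` for the
covariance matrix `C` of `q`; summing over `k` gives `∫ ‖My + c‖² dq = tr(M C Mᵀ) + ‖Mm + c‖²`.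
The noise `N(0, σ²I)` is the multivariate Gaussian of covariance `σ²I` (compare characteristic
functions), which yields the term `σ² tr(W Wᵀ)`; the outer integral against `p` yields the rest.
-/

open MeasureTheory ProbabilityTheory Matrix

noncomputable def gaussVec (d : ℕ) (σ : ℝ) : Measure (EuclideanSpace ℝ (Fin d)) :=
  (Measure.pi fun _ : Fin d => gaussianReal 0 (Real.toNNReal (σ ^ 2))).map
    (MeasurableEquiv.toLp 2 (Fin d → ℝ))

def toE {d : ℕ} (v : Fin d → ℝ) : EuclideanSpace ℝ (Fin d) := WithLp.toLp 2 v

noncomputable def dsmLoss (d : ℕ) (σ : ℝ) (p : Measure (EuclideanSpace ℝ (Fin d)))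
    (W : Matrix (Fin d) (Fin d) ℝ) (b : EuclideanSpace ℝ (Fin d)) : ℝ :=
  ∫ x, ∫ ε, ‖toE (W.mulVec (x + ε)) + b - x‖ ^ 2 ∂(gaussVec d σ) ∂p

lemma integral_add_const_sq {Ω : Type*} [MeasurableSpace Ω] {P : Measure Ω}
    [IsProbabilityMeasure P] {X : Ω → ℝ} (hX : MemLp X 2 P) (c : ℝ) :
    ∫ ω, (X ω + c) ^ 2 ∂P = Var[X; P] + (P[X] + c) ^ 2 := by
  have h := variance_eq_sub (X := fun ω => X ω + c) (hX.add (memLp_const c))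
  rw [variance_add_const hX.aestronglyMeasurable,
    integral_add (hX.integrable one_le_two) (integrable_const c)] at h
  simp only [Pi.pow_apply, integral_const, probReal_univ, one_smul] at h
  linarith

lemma Matrix.trace_mul_mul_transpose {R ι κ : Type*} [CommSemiring R] [Fintype ι] [Fintype κ]
    (M : Matrix κ ι R) (C : Matrix ι ι R) :
    trace (M * C * Mᵀ) = ∑ k, M k ⬝ᵥ C *ᵥ M k := by
  simp only [trace, diag, mul_apply, transpose_apply, mulVec, dotProduct, Finset.mul_sum,
    Finset.sum_mul]
  refine Finset.sum_congr rfl fun k _ => ?_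
  rw [Finset.sum_comm]
  exact Finset.sum_congr rfl fun i _ => Finset.sum_congr rfl fun j _ => by ring

section EuclideanSpace

variable {ι κ : Type*} [Fintype ι] [Fintype κ]

lemma dotProduct_eq_innerSL (v : ι → ℝ) (y : EuclideanSpace ℝ ι) :
    v ⬝ᵥ y = innerSL ℝ (WithLp.toLp 2 v) y := by
  simp [EuclideanSpace.inner_eq_star_dotProduct, dotProduct_comm]

variable {q : Measure (EuclideanSpace ℝ ι)}

lemma MeasureTheory.MemLp.dotProduct (hq : MemLp id 2 q) (v : ι → ℝ) :
    MemLp (fun y : EuclideanSpace ℝ ι => v ⬝ᵥ y) 2 q := by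
  simp only [dotProduct_eq_innerSL]
  exact (innerSL ℝ (WithLp.toLp 2 v)).comp_memLp' hq

lemma integral_dotProduct (hq : Integrable id q) (v : ι → ℝ) :
    ∫ y, v ⬝ᵥ y ∂q = v ⬝ᵥ (∫ y, y ∂q : EuclideanSpace ℝ ι) := by
  simp only [dotProduct_eq_innerSL]
  exact (innerSL ℝ (WithLp.toLp 2 v)).integral_comp_comm hq

noncomputable def covarianceMatrix (q : Measure (EuclideanSpace ℝ ι)) : Matrix ι ι ℝ :=
  Matrix.of fun i j => cov[fun x => x i, fun x => x j; q]

lemma covarianceMatrix_apply [IsFiniteMeasure q] (hq : MemLp id 2 q) (i j : ι) :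
    covarianceMatrix q i j =
      ∫ x, (x i - (∫ y, y ∂q) i) * (x j - (∫ y, y ∂q) j) ∂q := by
  have hint : ∀ i, Integrable (fun x : EuclideanSpace ℝ ι => x i) q :=
    (hq.integrable one_le_two).eval_piLp
  rw [covarianceMatrix, of_apply, covariance, eval_integral_piLp (f := fun x => x) hint,
    eval_integral_piLp (f := fun x => x) hint]

lemma variance_dotProduct [IsFiniteMeasure q] (hq : MemLp id 2 q) (v : ι → ℝ) :
    Var[fun x : EuclideanSpace ℝ ι => v ⬝ᵥ x; q] = v ⬝ᵥ covarianceMatrix q *ᵥ v := by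
  have hcoord : ∀ i, MemLp (fun x : EuclideanSpace ℝ ι => v i * x i) 2 q := fun i =>
    ((EuclideanSpace.proj (𝕜 := ℝ) i).comp_memLp' hq).const_mul (v i)
  rw [← covariance_self (by fun_prop)]
  simp only [dotProduct]
  rw [covariance_fun_sum_fun_sum hcoord hcoord]
  simp only [covariance_const_mul_left, covariance_const_mul_right, mulVec, dotProduct,
    Finset.mul_sum, covarianceMatrix, of_apply]
  exact Finset.sum_congr rfl fun i _ => Finset.sum_congr rfl fun j _ => by ring

lemma integrable_norm_sq_mulVec_add [IsFiniteMeasure q] (hq : MemLp id 2 q)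
    (M : Matrix κ ι ℝ) (c : EuclideanSpace ℝ κ) :
    Integrable (fun y : EuclideanSpace ℝ ι => ‖WithLp.toLp 2 (M *ᵥ y) + c‖ ^ 2) q :=
  (memLp_piLp_iff.2 fun k => (hq.dotProduct (M k)).add (memLp_const (c k))).integrable_norm_pow'

theorem integral_norm_sq_mulVec_add [IsProbabilityMeasure q] (hq : MemLp id 2 q)
    (M : Matrix κ ι ℝ) (c : EuclideanSpace ℝ κ) :
    ∫ y, ‖WithLp.toLp 2 (M *ᵥ y) + c‖ ^ 2 ∂q =
      trace (M * covarianceMatrix q * Mᵀ) +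
        ‖WithLp.toLp 2 (M *ᵥ (∫ y, y ∂q : EuclideanSpace ℝ ι)) + c‖ ^ 2 := by
  have hrow : ∀ k, MemLp (fun y : EuclideanSpace ℝ ι => M k ⬝ᵥ y) 2 q :=
    fun k => hq.dotProduct (M k)
  have hsq : ∀ k, Integrable (fun y : EuclideanSpace ℝ ι => ((M *ᵥ y) k + c k) ^ 2) q :=
    fun k => ((hrow k).add (memLp_const (c k))).integrable_sq
  simp only [EuclideanSpace.real_norm_sq_eq, PiLp.add_apply]
  rw [integral_finsetSum _ fun k _ => hsq k, trace_mul_mul_transpose,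
    ← Finset.sum_add_distrib]
  refine Finset.sum_congr rfl fun k _ => ?_
  have hmean : (M *ᵥ (∫ y, y ∂q : EuclideanSpace ℝ ι)) k = ∫ y, M k ⬝ᵥ y ∂q :=
    (integral_dotProduct (hq.integrable one_le_two) (M k)).symm
  rw [← variance_dotProduct hq, hmean]
  exact integral_add_const_sq (hrow k) (c k)

variable [DecidableEq ι]

lemma covarianceMatrix_multivariateGaussian {m : EuclideanSpace ℝ ι} {S : Matrix ι ι ℝ}
    (hS : S.PosSemidef) : covarianceMatrix (multivariateGaussian m S) = S := by
  ext i j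
  exact covariance_eval_multivariateGaussian hS i j

lemma map_pi_gaussianReal_eq_multivariateGaussian (m : ι → ℝ) (v : ι → NNReal) :
    (Measure.pi fun i => gaussianReal (m i) (v i)).map (WithLp.toLp 2) =
      multivariateGaussian (WithLp.toLp 2 m) (diagonal fun i => (v i : ℝ)) := by
  apply Measure.ext_of_charFun
  ext t
  have hS : (diagonal fun i => (v i : ℝ)).PosSemidef := PosSemidef.diagonal fun i => (v i).2
  rw [charFun_pi, charFun_multivariateGaussian hS]
  simp_rw [charFun_gaussianReal, ← Complex.exp_sum]
  congr 1
  simp only [Finset.sum_sub_distrib, PiLp.inner_apply, RCLike.inner_apply, Real.ringHom_apply,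
    Complex.ofReal_sum, Complex.ofReal_mul, Finset.sum_mul, dotProduct, mulVec_diagonal,
    Finset.sum_div]
  congr 1 <;> exact Finset.sum_congr rfl fun i _ => by ring

end EuclideanSpace

lemma gaussVec_eq_multivariateGaussian (d : ℕ) (σ : ℝ) :
    gaussVec d σ = multivariateGaussian 0 (σ ^ 2 • 1) := by
  rw [gaussVec, MeasurableEquiv.coe_toLp, map_pi_gaussianReal_eq_multivariateGaussian,
    Real.coe_toNNReal _ (sq_nonneg σ), smul_one_eq_diagonal]
  rfl

theorem dsmLoss_closed_form_general
    (d : ℕ) (σ : ℝ)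
    (p : Measure (EuclideanSpace ℝ (Fin d))) [IsProbabilityMeasure p]
    (μ : EuclideanSpace ℝ (Fin d)) (S : Matrix (Fin d) (Fin d) ℝ)
    (hp2 : MemLp id 2 p)
    (hmean : ∫ x, x ∂p = μ)
    (hcov : ∀ i j, ∫ x, (x i - μ i) * (x j - μ j) ∂p = S i j)
    (W : Matrix (Fin d) (Fin d) ℝ) (b : EuclideanSpace ℝ (Fin d)) :
    dsmLoss d σ p W b =
      Matrix.trace ((W - 1) * S * (W - 1)ᵀ) + σ ^ 2 * Matrix.trace (W * Wᵀ) +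
        ‖toE ((W - 1).mulVec μ) + b‖ ^ 2 := by
  have hS : covarianceMatrix p = S := by
    ext i j
    rw [covarianceMatrix_apply hp2, hmean, hcov]
  have hresidual : ∀ x ε : EuclideanSpace ℝ (Fin d), toE (W *ᵥ (x + ε)) + b - x =
      WithLp.toLp 2 (W *ᵥ ε) + (WithLp.toLp 2 ((W - 1) *ᵥ x) + b) := by
    intro x ε
    ext i
    simp only [toE, mulVec_add, sub_mulVec, one_mulVec, WithLp.toLp_add, WithLp.toLp_sub,
      WithLp.toLp_ofLp, PiLp.add_apply, PiLp.sub_apply]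
    ring
  have hnoise : ∀ x : EuclideanSpace ℝ (Fin d),
      ∫ ε, ‖toE (W *ᵥ (x + ε)) + b - x‖ ^ 2 ∂gaussVec d σ =
        σ ^ 2 * trace (W * Wᵀ) + ‖WithLp.toLp 2 ((W - 1) *ᵥ x) + b‖ ^ 2 := by
    intro x
    simp only [hresidual, gaussVec_eq_multivariateGaussian]
    rw [integral_norm_sq_mulVec_add IsGaussian.memLp_two_id,
      covarianceMatrix_multivariateGaussian (PosSemidef.one.smul (sq_nonneg σ)),
      integral_id_multivariateGaussian]
    simp [trace_smul]
  rw [dsmLoss, integral_congr_ae (ae_of_all _ hnoise),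
    integral_add (integrable_const _) (integrable_norm_sq_mulVec_add hp2 _ _),
    integral_norm_sq_mulVec_add hp2, hmean, hS]
  simp only [integral_const, probReal_univ, one_smul, toE]
  ring

/-- Closed-form decomposition of the denoising score-matching loss:
`L(W, b) = tr((W − I)Σ(W − I)ᵀ) + σ² tr(W Wᵀ) + ‖(W − I)μ + b‖²`. -/
theorem dsmLoss_closed_form
    (d : ℕ) (hd : 1 ≤ d) (σ : ℝ) (hσ : 0 < σ)
    (p : Measure (EuclideanSpace ℝ (Fin d))) [IsProbabilityMeasure p]
    (μ : EuclideanSpace ℝ (Fin d)) (S : Matrix (Fin d) (Fin d) ℝ)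
    (hp2 : MemLp id 2 p)
    (hmean : ∫ x, x ∂p = μ)
    (hcov : ∀ i j, ∫ x, (x i - μ i) * (x j - μ j) ∂p = S i j)
    (W : Matrix (Fin d) (Fin d) ℝ) (b : EuclideanSpace ℝ (Fin d)) :
    dsmLoss d σ p W b =
      Matrix.trace ((W - 1) * S * (W - 1)ᵀ) + σ ^ 2 * Matrix.trace (W * Wᵀ) +
        ‖toE ((W - 1).mulVec μ) + b‖ ^ 2 :=
  dsmLoss_closed_form_general d σ p μ S hp2 hmean hcov W b
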